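/- arXiv:1104.0973 — 2 statements merged into one kernel-verified Lean document; each statement's English description precedes it below -/
import Mathlib

section
/- For n ≥ 2, the Dynkin element P_n = T_{P_{1,n}} in ℂ[B_n] satisfies P_n = (1 - σ_{n-1}σ_{n-2}⋯σ_1)(1 - σ_{n-1}σ_{n-2}⋯σ_2)⋯(1 - σ_{n-1}σ_{n-2})(1 - σ_{n-1}), where P_{1,n} ∈ ℂ[S_n] is defined recursively by P_{i,i} = 1, P_{i,i+1} = 1 - (i,i+1), and P_{i,j} = P_{i+1,j} - P_{i,j-1}·(i,j,j-1,…,i+1), and T is the Matsumoto section applied term by term (each signed permutation in P_{1,n} lifts to its Matsumoto lift with the same sign). -/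
open scoped BigOperators

/-- The adjacent transposition `s_k = (k, k+1)` (0-indexed) in `S_n`. -/
def adjSwap (n k : ℕ) : Equiv.Perm (Fin n) :=
  if h : k + 1 < n then Equiv.swap ⟨k, Nat.lt_of_succ_lt h⟩ ⟨k + 1, h⟩ else 1

/-- The cycle `(i, j, j-1, …, i+1)` of `S_n` (sending `i ↦ j` and `k ↦ k-1` for
`i < k ≤ j`; 1-indexed), written as the product
`s_{j-1} s_{j-2} ⋯ s_i` of adjacent transpositions. -/
def descCycle (n i j : ℕ) : Equiv.Perm (Fin n) :=
  ((List.range (j - i)).map (fun t => adjSwap n (j - 2 - t))).prod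

/-!
The cycle `c_{i,j} = (i, j, j-1, …, i+1)` is the word `s_{j-1} ⋯ s_i`, and the braid relations
in `S_n` give `c_{i,j} c_{k,j} = c_{k-1,j-1} c_{i,j}` for `i < k ≤ j`. This turns the recursion
for `P_{i,j}` into the factorization `P_{i,j} = (1 - c_{i,j})(1 - c_{i+1,j}) ⋯ (1 - c_{j-1,j})`.

Expanding `P_{1,n}` gives signed products `c_{k_1,n} ⋯ c_{k_r,n}` with `k_1 < ⋯ < k_r`.
Building such a product from the right, each new adjacent transposition creates exactly one
inversion, so the Matsumoto section sends it to the same word in the `σ`'s, and the lifted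
expansion refactors as the product in `ℂ[B_n]`.
-/

open MonoidAlgebra

section DescProd

variable {M : Type*} [Monoid M] (σ : ℕ → M)

/-- `descProd σ b a = σ a * σ (a - 1) * ⋯ * σ (b + 1)`, and `1` when `a ≤ b`. -/
def descProd (b a : ℕ) : M := ((List.range (a - b)).map fun t => σ (a - t)).prod

@[simp]
lemma descProd_self (b : ℕ) : descProd σ b b = 1 := by simp [descProd]

lemma descProd_succ {b a : ℕ} (h : b ≤ a) : descProd σ b (a + 1) = σ (a + 1) * descProd σ b a := by
  rw [descProd, show a + 1 - b = a - b + 1 by omega, List.range_succ_eq_map, List.map_cons,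
    List.prod_cons, List.map_map]
  simp only [Function.comp_def, Nat.succ_eq_add_one, Nat.add_sub_add_right, Nat.sub_zero]
  rfl

variable {σ}

lemma commute_descProd {x : M} {b a : ℕ} (h : ∀ c, b < c → c ≤ a → Commute x (σ c)) :
    Commute x (descProd σ b a) :=
  Commute.list_prod_right _ _ fun y hy => by
    obtain ⟨t, ht, rfl⟩ := List.mem_map.mp hy
    exact h _ (by simp at ht; omega) (by omega)

end DescProd

lemma semiconjBy_list_prod_map {M ι : Type*} [Monoid M] {x : M} {f g : ι → M} {l : List ι}
    (h : ∀ i ∈ l, SemiconjBy x (f i) (g i)) : SemiconjBy x (l.map f).prod (l.map g).prod := by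
  induction l with
  | nil => exact SemiconjBy.one_right x
  | cons i l ih =>
    simp only [List.map_cons, List.prod_cons]
    exact (h i (by simp)).mul_right (ih fun j hj => h j (by simp [hj]))

section Braid

variable {M : Type*} [Monoid M]

structure SatisfiesBraidRelations (σ : ℕ → M) (N : ℕ) : Prop where
  commute : ∀ i j, 1 ≤ i → i + 2 ≤ j → j ≤ N → Commute (σ i) (σ j)
  braid : ∀ i, 1 ≤ i → i + 1 ≤ N → σ i * σ (i + 1) * σ i = σ (i + 1) * σ i * σ (i + 1)

variable {σ : ℕ → M} {N : ℕ}

lemma SatisfiesBraidRelations.semiconjBy_descProd (hσ : SatisfiesBraidRelations σ N)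
    {b t a : ℕ} (hbt : b + 2 ≤ t) (hta : t ≤ a) (haN : a ≤ N) :
    SemiconjBy (descProd σ b a) (σ t) (σ (t - 1)) := by
  induction a, hta using Nat.le_induction with
  | base =>
    obtain ⟨s, rfl⟩ : ∃ s, t = s + 2 := ⟨t - 2, by omega⟩
    rw [descProd_succ σ (by omega), descProd_succ σ (by omega), ← mul_assoc,
      show s + 2 - 1 = s + 1 from rfl]
    refine SemiconjBy.mul_left (y := σ (s + 2)) ?_ ?_
    · simpa only [SemiconjBy, ← mul_assoc] using (hσ.braid (s + 1) (by omega) haN).symm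
    · exact (commute_descProd fun c hbc hcs =>
        (hσ.commute c (s + 2) (by omega) (by omega) haN).symm).symm
  | succ a hta ih =>
    rw [descProd_succ σ (by omega)]
    exact SemiconjBy.mul_left (hσ.commute (t - 1) (a + 1) (by omega) (by omega) haN).symm
      (ih (by omega))

lemma SatisfiesBraidRelations.descProd_mul_descProd (hσ : SatisfiesBraidRelations σ N)
    {b e a : ℕ} (hbe : b < e) (hea : e ≤ a) (haN : a ≤ N) :
    descProd σ b a * descProd σ e a = descProd σ (e - 1) (a - 1) * descProd σ b a := by
  unfold descProd
  rw [show a - 1 - (e - 1) = a - e by omega]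
  refine semiconjBy_list_prod_map fun t ht => ?_
  rw [show a - 1 - t = a - t - 1 by omega]
  exact hσ.semiconjBy_descProd (by simp at ht; omega) (by omega) haN

end Braid

section AdjSwap

variable {n : ℕ}

lemma adjSwap_val {k : ℕ} (h : k + 1 < n) (x : Fin n) :
    (adjSwap n k x : ℕ) = if (x : ℕ) = k then k + 1 else if (x : ℕ) = k + 1 then k else x := by
  rw [adjSwap, dif_pos h, Equiv.swap_apply_def]
  split_ifs <;> simp_all [Fin.ext_iff]

lemma adjSwap_apply_of_ne {k : ℕ} {x : Fin n} (h₁ : (x : ℕ) ≠ k) (h₂ : (x : ℕ) ≠ k + 1) :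
    adjSwap n k x = x := by
  by_cases h : k + 1 < n
  · simp only [Fin.ext_iff, adjSwap_val h, if_neg h₁, if_neg h₂]
  · rw [show adjSwap n k = 1 from dif_neg h, Equiv.Perm.one_apply]

lemma commute_adjSwap {a b : ℕ} (hab : a + 2 ≤ b) : Commute (adjSwap n a) (adjSwap n b) := by
  by_cases hb : b + 1 < n
  · ext x
    simp only [Equiv.Perm.mul_apply, adjSwap_val hb, adjSwap_val (show a + 1 < n by omega)]
    split_ifs <;> omega
  · rw [show adjSwap n b = 1 from dif_neg hb]
    exact Commute.one_right _

lemma adjSwap_braid {a : ℕ} (h : a + 2 < n) :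
    adjSwap n a * adjSwap n (a + 1) * adjSwap n a =
      adjSwap n (a + 1) * adjSwap n a * adjSwap n (a + 1) := by
  ext x
  simp only [Equiv.Perm.mul_apply, adjSwap_val h, adjSwap_val (show a + 1 < n by omega)]
  split_ifs <;> omega

/-- The image in `S_n` of the braid generator `σ_c`; braid generators are 1-indexed. -/
def stdGen (n c : ℕ) : Equiv.Perm (Fin n) := adjSwap n (c - 1)

lemma satisfiesBraidRelations_stdGen : SatisfiesBraidRelations (stdGen n) (n - 1) where
  commute i j hi hij _ := commute_adjSwap (by omega)
  braid i hi hin := by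
    have := adjSwap_braid (n := n) (a := i - 1) (by omega)
    rwa [show i - 1 + 1 = i by omega] at this

lemma descCycle_eq_descProd {i : ℕ} (hi : 1 ≤ i) (j : ℕ) :
    descCycle n i j = descProd (stdGen n) (i - 1) (j - 1) := by
  unfold descCycle descProd stdGen
  rw [show j - 1 - (i - 1) = j - i by omega]
  congr 1
  refine List.map_congr_left fun t _ => ?_
  congr 1
  omega

lemma descProd_stdGen_apply_of_not_mem {b a : ℕ} (hba : b ≤ a) {x : Fin n}
    (hx : (x : ℕ) < b ∨ a < x) : descProd (stdGen n) b a x = x := by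
  induction a, hba using Nat.le_induction with
  | base => simp
  | succ a hba ih =>
    rw [descProd_succ _ hba, Equiv.Perm.mul_apply, ih (by omega), stdGen, Nat.add_sub_cancel,
      adjSwap_apply_of_ne (by omega) (by omega)]

lemma descProd_stdGen_apply_self {b a : ℕ} (hba : b ≤ a) (ha : a < n) :
    descProd (stdGen n) b a ⟨b, hba.trans_lt ha⟩ = ⟨a, ha⟩ := by
  induction a, hba using Nat.le_induction with
  | base => simp
  | succ a hba ih =>
    rw [descProd_succ _ hba, Equiv.Perm.mul_apply, ih (by omega), stdGen, Nat.add_sub_cancel,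
      Fin.ext_iff, adjSwap_val ha, if_pos rfl]

end AdjSwap

section Inversions

variable {n : ℕ}

def inversions (w : Equiv.Perm (Fin n)) : Finset (Fin n × Fin n) :=
  Finset.univ.filter fun p => p.1 < p.2 ∧ w p.2 < w p.1

lemma inversions_adjSwap_mul {k : ℕ} (h : k + 1 < n) {w : Equiv.Perm (Fin n)}
    (hw : w⁻¹ ⟨k, by omega⟩ < w⁻¹ ⟨k + 1, h⟩) :
    inversions (adjSwap n k * w) = insert (w⁻¹ ⟨k, by omega⟩, w⁻¹ ⟨k + 1, h⟩) (inversions w) := by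
  have hinv {i : Fin n} {m : ℕ} (hm : m < n) : i = w⁻¹ ⟨m, hm⟩ ↔ (w i : ℕ) = m := by
    rw [Equiv.Perm.eq_inv_iff_eq, Fin.ext_iff]
  have hlt (i j : Fin n) (hi : (w i : ℕ) = k) (hj : (w j : ℕ) = k + 1) : (i : ℕ) < j := by
    rwa [(hinv _).mpr hi, (hinv h).mpr hj]
  ext ⟨i, j⟩
  have := hlt i j
  have := hlt j i
  simp only [inversions, Finset.mem_insert, Finset.mem_filter, Finset.mem_univ, true_and,
    Prod.mk.injEq, Equiv.Perm.mul_apply, Fin.lt_def, adjSwap_val h, hinv]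
  split_ifs <;> omega

lemma card_inversions_adjSwap_mul {k : ℕ} (h : k + 1 < n) {w : Equiv.Perm (Fin n)}
    (hw : w⁻¹ ⟨k, by omega⟩ < w⁻¹ ⟨k + 1, h⟩) :
    (inversions (adjSwap n k * w)).card = (inversions w).card + 1 := by
  rw [inversions_adjSwap_mul h hw, Finset.card_insert_of_notMem]
  simp [inversions]

end Inversions

lemma Equiv.Perm.list_prod_apply_eq_self {α : Type*} {l : List (Equiv.Perm α)} {x : α}
    (h : ∀ g ∈ l, g x = x) : l.prod x = x :=
  MulAction.mem_stabilizer_iff.mp <| Subgroup.list_prod_mem _ fun g hg =>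
    MulAction.mem_stabilizer_iff.mpr (h g hg)

section Matsumoto

variable {n : ℕ} {G : Type*} [Monoid G]

structure IsMatsumotoSection (σ : ℕ → G) (T : Equiv.Perm (Fin n) → G) : Prop where
  map_one : T 1 = 1
  map_adjSwap_mul : ∀ (w : Equiv.Perm (Fin n)) (i : ℕ), i + 1 < n →
    (inversions (adjSwap n i * w)).card = (inversions w).card + 1 →
      T (adjSwap n i * w) = σ (i + 1) * T w

variable {σ : ℕ → G} {T : Equiv.Perm (Fin n) → G}

lemma IsMatsumotoSection.map_descProd_mul (hT : IsMatsumotoSection σ T) {b a : ℕ} (hba : b ≤ a)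
    (ha : a < n) {v : Equiv.Perm (Fin n)} (hv : ∀ x : Fin n, (x : ℕ) ≤ b → v x = x) :
    T (descProd (stdGen n) b a * v) = descProd σ b a * T v := by
  induction a, hba using Nat.le_induction with
  | base => simp
  | succ a hba ih =>
    set u := descProd (stdGen n) b a * v
    have hu_a : u⁻¹ ⟨a, by omega⟩ = ⟨b, by omega⟩ := by
      rw [Equiv.Perm.inv_eq_iff_eq, Equiv.Perm.mul_apply, hv _ le_rfl,
        descProd_stdGen_apply_self hba (by omega)]
    have hu_succ : u⁻¹ ⟨a + 1, ha⟩ = v⁻¹ ⟨a + 1, ha⟩ := by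
      rw [mul_inv_rev, Equiv.Perm.mul_apply, Equiv.Perm.inv_eq_iff_eq.mpr
        (descProd_stdGen_apply_of_not_mem hba (by simp)).symm]
    have hv_succ : b < (v⁻¹ ⟨a + 1, ha⟩ : ℕ) := by
      by_contra! hle
      have h := Fin.ext_iff.mp ((hv _ hle).symm.trans (Equiv.apply_symm_apply v _))
      simp only at h
      omega
    have hlt : u⁻¹ ⟨a, by omega⟩ < u⁻¹ ⟨a + 1, ha⟩ := by
      rw [hu_a, hu_succ]
      exact hv_succ
    rw [descProd_succ _ hba, stdGen, Nat.add_sub_cancel, mul_assoc,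
      hT.map_adjSwap_mul u a ha (card_inversions_adjSwap_mul ha hlt), ih (by omega),
      descProd_succ _ hba, mul_assoc]

lemma IsMatsumotoSection.map_prod_descProd (hT : IsMatsumotoSection σ T) {a : ℕ} (ha : a < n)
    {l : List ℕ} (hl : l.Pairwise (· < ·)) (hla : ∀ r ∈ l, r ≤ a) :
    T (l.map fun r => descProd (stdGen n) r a).prod = (l.map fun r => descProd σ r a).prod := by
  induction l with
  | nil => exact hT.map_one
  | cons r l ih =>
    obtain ⟨hrl, hl⟩ := List.pairwise_cons.mp hl
    have hfix (x : Fin n) (hx : (x : ℕ) ≤ r) :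
        (l.map fun r => descProd (stdGen n) r a).prod x = x := by
      refine Equiv.Perm.list_prod_apply_eq_self fun g hg => ?_
      obtain ⟨r', hr', rfl⟩ := List.mem_map.mp hg
      have := hrl r' hr'
      exact descProd_stdGen_apply_of_not_mem (hla r' (by simp [hr'])) (Or.inl (by omega))
    simp only [List.map_cons, List.prod_cons]
    rw [hT.map_descProd_mul (hla r (by simp)) ha hfix, ih hl fun r' hr' => hla r' (by simp [hr'])]

end Matsumoto

section MapDomain

variable {R M M' ι : Type*} [Ring R] [Monoid M] [Monoid M']

lemma MonoidAlgebra.mapDomain_sub (T : M → M') (x y : R[M]) :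
    mapDomain T (x - y) = mapDomain T x - mapDomain T y :=
  eq_sub_of_add_eq (by rw [← mapDomain_add, sub_add_cancel])

lemma MonoidAlgebra.mapDomain_of_mul_prod_one_sub {T : M → M'} {f : ι → M} {g : ι → M'}
    {l : List ι} {x : M} {y : M'}
    (h : ∀ s : List ι, s.Sublist l → T (x * (s.map f).prod) = y * (s.map g).prod) :
    mapDomain T (of R M x * (l.map fun i => 1 - of R M (f i)).prod) =
      of R M' y * (l.map fun i => 1 - of R M' (g i)).prod := by
  induction l generalizing x y with
  | nil =>
    have hx : T x = y := by simpa using h [] List.Sublist.slnil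
    simp [hx]
  | cons i l ih =>
    simp only [List.map_cons, List.prod_cons, mul_sub, mul_one, sub_mul, ← mul_assoc, ← map_mul,
      mapDomain_sub]
    rw [ih fun s hs => h s (hs.cons i),
      ih (y := y * g i) fun s hs => by simpa [mul_assoc] using h _ (hs.cons_cons i)]

lemma MonoidAlgebra.mapDomain_prod_one_sub {T : M → M'} {f : ι → M} {g : ι → M'} {l : List ι}
    (h : ∀ s : List ι, s.Sublist l → T (s.map f).prod = (s.map g).prod) :
    mapDomain T ((l.map fun i => 1 - of R M (f i)).prod) =
      (l.map fun i => 1 - of R M' (g i)).prod := by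
  have := mapDomain_of_mul_prod_one_sub (R := R) (x := 1) (y := 1) (T := T) (by simpa using h)
  rwa [map_one, map_one, one_mul, one_mul] at this

end MapDomain

section DynkinFactorization

variable (R : Type*) [Ring R] {n : ℕ}

noncomputable def oneSubCycleProd (n i j : ℕ) : R[Equiv.Perm (Fin n)] :=
  ((List.range' i (j - i)).map fun k => 1 - of R _ (descCycle n k j)).prod

variable {R}

lemma descCycle_succ (i : ℕ) : descCycle n i (i + 1) = adjSwap n (i - 1) := by
  simp [descCycle]

lemma descCycle_mul_descCycle {i k j : ℕ} (hi : 1 ≤ i) (hik : i < k) (hkj : k ≤ j) (hjn : j ≤ n) :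
    descCycle n i j * descCycle n k j = descCycle n (k - 1) (j - 1) * descCycle n i j := by
  simp only [descCycle_eq_descProd hi, descCycle_eq_descProd (show 1 ≤ k by omega),
    descCycle_eq_descProd (show 1 ≤ k - 1 by omega)]
  exact satisfiesBraidRelations_stdGen.descProd_mul_descProd (by omega) (by omega) (by omega)

lemma of_descCycle_mul_oneSubCycleProd {i j : ℕ} (hi : 1 ≤ i) (hij : i < j) (hjn : j ≤ n) :
    of R _ (descCycle n i j) * oneSubCycleProd R n (i + 1) j =
      oneSubCycleProd R n i (j - 1) * of R _ (descCycle n i j) := by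
  unfold oneSubCycleProd
  rw [show j - 1 - i = j - (i + 1) by omega, List.range'_eq_map_range,
    List.range'_eq_map_range, List.map_map, List.map_map]
  refine semiconjBy_list_prod_map fun r hr => ?_
  simp only [Function.comp_apply, SemiconjBy, mul_sub, sub_mul, mul_one, one_mul, ← map_mul]
  rw [descCycle_mul_descCycle hi (by omega) (by simp at hr; omega) hjn,
    show i + 1 + r - 1 = i + r by omega]

lemma eq_oneSubCycleProd {P : ℕ → ℕ → R[Equiv.Perm (Fin n)]}
    (hPii : ∀ i, 1 ≤ i → i ≤ n → P i i = 1)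
    (hPii1 : ∀ i, 1 ≤ i → i + 1 ≤ n → P i (i + 1) = 1 - of R _ (adjSwap n (i - 1)))
    (hPrec : ∀ i j, 1 ≤ i → i + 2 ≤ j → j ≤ n →
      P i j = P (i + 1) j - P i (j - 1) * of R _ (descCycle n i j))
    {i j : ℕ} (hi : 1 ≤ i) (hij : i ≤ j) (hjn : j ≤ n) :
    P i j = oneSubCycleProd R n i j := by
  induction h : j - i using Nat.strong_induction_on generalizing i j with
  | _ d ih =>
    obtain rfl | rfl | hij2 : j = i ∨ j = i + 1 ∨ i + 2 ≤ j := by omega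
    · simp [hPii _ hi hjn, oneSubCycleProd]
    · simp [hPii1 i hi hjn, oneSubCycleProd, descCycle_succ]
    · rw [hPrec i j hi hij2 hjn, ih (j - (i + 1)) (by omega) (by omega) (by omega) hjn rfl,
        ih (j - 1 - i) (by omega) hi (by omega) (by omega) rfl,
        ← of_descCycle_mul_oneSubCycleProd hi (by omega) hjn, ← one_sub_mul, oneSubCycleProd,
        oneSubCycleProd, show j - i = j - (i + 1) + 1 by omega, List.range'_succ, List.map_cons,
        List.prod_cons]

end DynkinFactorization

theorem dynkin_element_decomposition_general {G : Type*} [Group G] (n : ℕ) (hn : 2 ≤ n)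
    (σ : ℕ → G)
    (T : Equiv.Perm (Fin n) → G)
    (hT1 : T 1 = 1)
    (hT : ∀ (w : Equiv.Perm (Fin n)) (i : ℕ), i + 1 < n →
      (Finset.univ.filter (fun p : Fin n × Fin n =>
          p.1 < p.2 ∧ (adjSwap n i * w) p.2 < (adjSwap n i * w) p.1)).card =
        (Finset.univ.filter (fun p : Fin n × Fin n =>
          p.1 < p.2 ∧ w p.2 < w p.1)).card + 1 →
      T (adjSwap n i * w) = σ (i + 1) * T w)
    (P : ℕ → ℕ → MonoidAlgebra ℂ (Equiv.Perm (Fin n)))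
    (hPii : ∀ i, 1 ≤ i → i ≤ n → P i i = 1)
    (hPii1 : ∀ i, 1 ≤ i → i + 1 ≤ n →
      P i (i + 1) = 1 - MonoidAlgebra.of ℂ _ (adjSwap n (i - 1)))
    (hPrec : ∀ i j, 1 ≤ i → i + 2 ≤ j → j ≤ n →
      P i j = P (i + 1) j - P i (j - 1) * MonoidAlgebra.of ℂ _ (descCycle n i j)) :
    MonoidAlgebra.mapDomain T (P 1 n) =
      ((List.range (n - 1)).map (fun r =>
        (1 : MonoidAlgebra ℂ G) -
          MonoidAlgebra.of ℂ G
            (((List.range (n - 1 - r)).map (fun t => σ (n - 1 - t))).prod))).prod := by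
  have hTσ : IsMatsumotoSection σ T := ⟨hT1, hT⟩
  rw [eq_oneSubCycleProd hPii hPii1 hPrec le_rfl (by omega) le_rfl, oneSubCycleProd,
    List.range'_eq_map_range, List.map_map]
  refine mapDomain_prod_one_sub fun s hs => ?_
  simp only [descCycle_eq_descProd (Nat.le_add_right 1 _), Nat.add_sub_cancel_left]
  exact hTσ.map_prod_descProd (by omega) (List.pairwise_lt_range.sublist hs)
    fun r hr => (List.mem_range.mp (hs.subset hr)).le

/-- For `n ≥ 2`, the Dynkin element `P_n = T_{P_{1,n}} ∈ ℂ[B_n]` satisfies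
`P_n = (1 - σ_{n-1}σ_{n-2}⋯σ_1)(1 - σ_{n-1}σ_{n-2}⋯σ_2)⋯(1 - σ_{n-1}σ_{n-2})(1 - σ_{n-1})`,
where `P_{i,j} ∈ ℂ[S_n]` is defined recursively by `P_{i,i} = 1`,
`P_{i,i+1} = 1 - (i,i+1)`, and `P_{i,j} = P_{i+1,j} - P_{i,j-1}·(i,j,j-1,…,i+1)`,
and `T` is the Matsumoto section applied term by term (linearly extended to
`ℂ[S_n] → ℂ[B_n]` via `Finsupp.mapDomain`, so each signed permutation lifts to
its Matsumoto lift with the same coefficient).  The braid group is presented by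
any group `G` with elements `σ_1, …, σ_{n-1}` satisfying the braid relations;
the Matsumoto section `T : S_n → B_n` is characterized by `T(1) = 1` and
`T(s_{i+1} w) = σ_{i+1} T(w)` whenever the length increases by one. -/
theorem dynkin_element_decomposition {G : Type*} [Group G] (n : ℕ) (hn : 2 ≤ n)
    (σ : ℕ → G)
    (hcomm : ∀ i j, 1 ≤ i → i + 2 ≤ j → j ≤ n - 1 → σ i * σ j = σ j * σ i)
    (hbraid : ∀ i, 1 ≤ i → i + 1 ≤ n - 1 →
      σ i * σ (i + 1) * σ i = σ (i + 1) * σ i * σ (i + 1))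
    (T : Equiv.Perm (Fin n) → G)
    (hT1 : T 1 = 1)
    (hT : ∀ (w : Equiv.Perm (Fin n)) (i : ℕ), i + 1 < n →
      (Finset.univ.filter (fun p : Fin n × Fin n =>
          p.1 < p.2 ∧ (adjSwap n i * w) p.2 < (adjSwap n i * w) p.1)).card =
        (Finset.univ.filter (fun p : Fin n × Fin n =>
          p.1 < p.2 ∧ w p.2 < w p.1)).card + 1 →
      T (adjSwap n i * w) = σ (i + 1) * T w)
    (P : ℕ → ℕ → MonoidAlgebra ℂ (Equiv.Perm (Fin n)))
    (hPii : ∀ i, 1 ≤ i → i ≤ n → P i i = 1)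
    (hPii1 : ∀ i, 1 ≤ i → i + 1 ≤ n →
      P i (i + 1) = 1 - MonoidAlgebra.of ℂ _ (adjSwap n (i - 1)))
    (hPrec : ∀ i j, 1 ≤ i → i + 2 ≤ j → j ≤ n →
      P i j = P (i + 1) j - P i (j - 1) * MonoidAlgebra.of ℂ _ (descCycle n i j)) :
    MonoidAlgebra.mapDomain T (P 1 n) =
      ((List.range (n - 1)).map (fun r =>
        (1 : MonoidAlgebra ℂ G) -
          MonoidAlgebra.of ℂ G
            (((List.range (n - 1 - r)).map (fun t => σ (n - 1 - t))).prod))).prod :=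
  dynkin_element_decomposition_general n hn σ T hT1 hT P hPii hPii1 hPrec
end

section
/- Let q ∈ ℂ* be not a root of unity and let s, t be positive integers. In the Yetter-Drinfel'd module V over ℂ[ℤ²] of U_q(sl_3)-type (braiding matrix q_{11} = q_{22} = q², q_{12} = q_{21} = q^{-1}), the full twist θ_{s+t} acts on the monomial E_1^s E_2^t ∈ V^{⊗(s+t)} by the scalar q^{2(s² - s + t² - t - st)}. Consequently θ_{s+t}(E_1^sE_2^t) = E_1^sE_2^t if and only if (s-t)² + (s-1)² + (t-1)² = 2, whose only positive integer solutions are (s,t) ∈ {(2,2),(2,1),(1,2)}. -/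
/-! The braid `σ_{n-1} ⋯ σ_1` carries the first tensor factor of a monomial `f` past all the
others, so it sends `f` to its rotation `f ∘ finRotate n`, times the braiding scalars of the
first letter against every other letter. After `n` such passes the monomial is back in place
and every letter has been braided once past every other one, so `θ_n f = ∏_{i ≠ j} q(f i, f j) f`.
For the `sl_3` braiding `q^{a_{ij}}` this scalar is `q` to the power `∑_{i ≠ j} a(f i, f j)`,
which for `E_1^s E_2^t` equals `2s(s - 1) + 2t(t - 1) - 2st`. As `q` is not a root of unity, the
twist is trivial exactly when this vanishes, i.e. when `(s-t)² + (s-1)² + (t-1)² = 2`. -/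

open scoped BigOperators

/-- The degree-`n` part `V^{⊗n}` of the tensor algebra of a vector space `V`
with basis indexed by `ι`, modelled on its monomial basis. -/
abbrev TPow (ι : Type*) (n : ℕ) : Type _ := (Fin n → ι) →₀ ℂ

/-- The action of the braid group generator `σ_{k+1}` (acting in tensor
positions `k, k+1`, 0-indexed) on `V^{⊗n}` for a braiding of diagonal type
`σ(v_i ⊗ v_j) = q i j • v_j ⊗ v_i`. -/
noncomputable def diagGen {ι : Type*} (q : ι → ι → ℂ) (n k : ℕ) :
    Module.End ℂ (TPow ι n) :=
  Finsupp.lsum ℂ fun f =>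
    if h : k + 1 < n then
      LinearMap.toSpanSingleton ℂ _
        (q (f ⟨k, Nat.lt_of_succ_lt h⟩) (f ⟨k + 1, h⟩) •
          Finsupp.single (f ∘ Equiv.swap ⟨k, Nat.lt_of_succ_lt h⟩ ⟨k + 1, h⟩) 1)
    else 0

/-- The full twist `θ_n = (σ_{n-1}σ_{n-2}⋯σ_1)^n` acting on `V^{⊗n}`. -/
noncomputable def fullTwist {ι : Type*} (q : ι → ι → ℂ) (n : ℕ) :
    Module.End ℂ (TPow ι n) :=
  (((List.range (n - 1)).reverse).map (diagGen q n)).prod ^ n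

/-- The braiding matrix of `U_q(sl_3)`-type on the basis `E_1, E_2`:
`q_{11} = q_{22} = q²`, `q_{12} = q_{21} = q⁻¹`. -/
noncomputable def sl3Braiding (q : ℂ) : Fin 2 → Fin 2 → ℂ :=
  fun i j => if i = j then q ^ 2 else q⁻¹

/-- The monomial `E_1^s E_2^t` in `V^{⊗(s+t)}`. -/
def sl3Monomial (s t : ℕ) : Fin (s + t) → Fin 2 :=
  fun i => if (i : ℕ) < s then 0 else 1

open Equiv Finset Fin.NatCast

theorem Fin.cycleRange_mul_swap {n k : ℕ} (h : k + 1 < n) :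
    Fin.cycleRange (⟨k, by omega⟩ : Fin n) * swap ⟨k, by omega⟩ ⟨k + 1, h⟩ =
      Fin.cycleRange ⟨k + 1, h⟩ := by
  have : NeZero n := ⟨by omega⟩
  ext j
  simp only [Perm.mul_apply, Fin.cycleRange_apply, swap_apply_def]
  split_ifs <;> simp_all [Fin.ext_iff, Fin.lt_def, Fin.val_add_one_of_lt'] <;> omega

theorem Fin.prod_univ_erase_zero {M : Type*} [CommMonoid M] {N : ℕ} (h : Fin (N + 1) → M) :
    ∏ j ∈ univ.erase 0, h j = ∏ j : Fin N, h j.succ := by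
  rw [Fin.univ_succ, erase_cons, prod_map]
  rfl

theorem Fin.prod_univ_erase_zero_add {M : Type*} [CommMonoid M] {n : ℕ} [NeZero n]
    (h : Fin n → M) (x : Fin n) :
    ∏ j ∈ univ.erase 0, h (j + x) = ∏ j ∈ univ.erase x, h j :=
  prod_nbij' (· + x) (· - x) (by simp)
    (fun _ ha ↦ mem_erase.2 ⟨sub_ne_zero.2 (ne_of_mem_erase ha), mem_univ _⟩) (by simp) (by simp)
    (by simp)

theorem iterate_comp_finRotate {ι : Type*} {n : ℕ} [NeZero n] (f : Fin n → ι) (l : ℕ) :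
    (fun g : Fin n → ι => g ∘ finRotate n)^[l] f = fun i => f (i + (l : Fin n)) := by
  induction l with
  | zero => simp
  | succ l ih =>
    rw [Function.iterate_succ_apply', ih]
    funext i
    simp only [Function.comp_apply, finRotate_apply]
    rw [Nat.cast_succ, ← add_assoc, add_right_comm]

theorem Module.End.pow_apply_single {R α : Type*} [CommSemiring R]
    (P : Module.End R (α →₀ R)) (τ : α → α) (c : α → R)
    (hP : ∀ a, P (Finsupp.single a 1) = c a • Finsupp.single (τ a) 1) (m : ℕ) (a : α) :
    (P ^ m) (Finsupp.single a 1) =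
      (∏ l ∈ range m, c (τ^[l] a)) • Finsupp.single (τ^[m] a) 1 := by
  induction m with
  | zero => simp
  | succ m ih =>
    rw [pow_succ', Module.End.mul_apply, ih, map_smul, hP, smul_smul, prod_range_succ,
      Function.iterate_succ_apply']

theorem prod_zpow_eq_zpow_sum {α G : Type*} [CommGroupWithZero G] {a : G} (ha : a ≠ 0)
    (s : Finset α) (e : α → ℤ) : ∏ x ∈ s, a ^ e x = a ^ ∑ x ∈ s, e x := by
  induction s using Finset.cons_induction with
  | empty => simp
  | cons x s hx ih => rw [prod_cons, sum_cons, ih, zpow_add₀ ha]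

theorem zpow_eq_one_iff_of_forall_pow_ne_one {G : Type*} [GroupWithZero G] {a : G}
    (ha : ∀ N : ℕ, 1 ≤ N → a ^ N ≠ 1) {E : ℤ} : a ^ E = 1 ↔ E = 0 := by
  refine ⟨fun h => ?_, fun h => by rw [h, zpow_zero]⟩
  by_contra hE
  refine ha E.natAbs (Int.natAbs_pos.2 hE) ?_
  rcases Int.natAbs_eq E with hE' | hE'
  · rwa [hE', zpow_natCast] at h
  · rwa [hE', zpow_neg, inv_eq_one, zpow_natCast] at h

section Braiding

variable {ι : Type*} (q : ι → ι → ℂ)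

theorem diagGen_single {n k : ℕ} (h : k + 1 < n) (f : Fin n → ι) :
    diagGen q n k (Finsupp.single f 1) =
      q (f ⟨k, by omega⟩) (f ⟨k + 1, h⟩) •
        Finsupp.single (f ∘ swap ⟨k, by omega⟩ ⟨k + 1, h⟩) 1 := by
  rw [diagGen, Finsupp.lsum_single, dif_pos h, LinearMap.toSpanSingleton_apply, one_smul]

theorem list_prod_diagGen_single {n k : ℕ} (hk : k < n) (f : Fin n → ι) :
    ((List.range k).reverse.map (diagGen q n)).prod (Finsupp.single f 1) =
      (∏ j : Fin k, q (f ⟨0, by omega⟩) (f ⟨j + 1, by omega⟩)) •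
        Finsupp.single (f ∘ Fin.cycleRange ⟨k, hk⟩) 1 := by
  induction k with
  | zero => simp
  | succ k ih =>
    rw [List.range_succ, List.reverse_append, List.map_append, List.prod_append]
    simp only [List.reverse_singleton, List.map_cons, List.map_nil, List.prod_cons,
      List.prod_nil, mul_one]
    rw [Module.End.mul_apply, ih (by omega), map_smul, diagGen_single q hk, smul_smul,
      Fin.prod_univ_castSucc, Function.comp_assoc, ← Perm.coe_mul, Fin.cycleRange_mul_swap]
    have : NeZero n := ⟨by omega⟩
    simp only [Function.comp_apply, Fin.cycleRange_self,
      Fin.cycleRange_of_gt (show (⟨k, _⟩ : Fin n) < ⟨k + 1, hk⟩ from Nat.lt_succ_self k)]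
    rfl

theorem list_prod_diagGen_single_finRotate {N : ℕ} (g : Fin (N + 1) → ι) :
    ((List.range N).reverse.map (diagGen q (N + 1))).prod (Finsupp.single g 1) =
      (∏ j ∈ univ.erase 0, q (g 0) (g j)) • Finsupp.single (g ∘ finRotate (N + 1)) 1 := by
  rw [list_prod_diagGen_single q N.lt_succ_self, Fin.prod_univ_erase_zero,
    ← Fin.cycleRange_last]
  rfl

theorem fullTwist_single {n : ℕ} (f : Fin n → ι) :
    fullTwist q n (Finsupp.single f 1) =
      (∏ i, ∏ j ∈ univ.erase i, q (f i) (f j)) • Finsupp.single f 1 := by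
  obtain _ | N := n
  · simp [fullTwist]
  rw [fullTwist, Nat.add_sub_cancel,
    Module.End.pow_apply_single _ _ _ (list_prod_diagGen_single_finRotate q)]
  have hpass (l : ℕ) : ∏ j ∈ univ.erase 0, q (f (0 + l)) (f (j + l)) =
      ∏ j ∈ univ.erase (l : Fin (N + 1)), q (f l) (f j) := by
    rw [zero_add]
    exact Fin.prod_univ_erase_zero_add (fun j => q (f l) (f j)) l
  simp only [iterate_comp_finRotate, hpass, Fin.natCast_self, add_zero]
  rw [← Fin.prod_univ_eq_prod_range (fun l => ∏ j ∈ univ.erase (l : Fin (N + 1)), q (f l) (f j))]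
  simp only [Fin.cast_val_eq_self]

end Braiding

def sl3Cartan (i j : Fin 2) : ℤ := if i = j then 2 else -1

theorem sl3Braiding_eq_zpow (q : ℂ) (i j : Fin 2) : sl3Braiding q i j = q ^ sl3Cartan i j := by
  unfold sl3Braiding sl3Cartan
  split_ifs <;> simp

theorem sum_sl3Monomial {M : Type*} [AddCommMonoid M] (s t : ℕ) (g : Fin 2 → M) :
    ∑ i, g (sl3Monomial s t i) = s • g 0 + t • g 1 := by
  simp [Fin.sum_univ_add, sl3Monomial]

theorem sum_offDiag_sl3Cartan_sl3Monomial (s t : ℕ) :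
    ∑ i, ∑ j ∈ univ.erase i, sl3Cartan (sl3Monomial s t i) (sl3Monomial s t j) =
      2 * ((s : ℤ) ^ 2 - s + t ^ 2 - t - s * t) := by
  simp only [sum_erase_eq_sub (mem_univ _), sum_sl3Monomial s t (sl3Cartan _),
    sum_sl3Monomial s t fun c => s • sl3Cartan c 0 + t • sl3Cartan c 1 - sl3Cartan c c]
  simp [sl3Cartan]
  ring

theorem fullTwist_sl3Monomial {q : ℂ} (hq : q ≠ 0) (s t : ℕ) :
    fullTwist (sl3Braiding q) (s + t) (Finsupp.single (sl3Monomial s t) 1) =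
      q ^ (2 * ((s : ℤ) ^ 2 - s + t ^ 2 - t - s * t)) • Finsupp.single (sl3Monomial s t) 1 := by
  simp only [fullTwist_single, sl3Braiding_eq_zpow, prod_zpow_eq_zpow_sum hq,
    sum_offDiag_sl3Cartan_sl3Monomial]

theorem sq_sub_add_sq_sub_one_add_sq_sub_one_eq_two_iff {s t : ℕ} (hs : 1 ≤ s) (ht : 1 ≤ t) :
    ((s : ℤ) - t) ^ 2 + ((s : ℤ) - 1) ^ 2 + ((t : ℤ) - 1) ^ 2 = 2 ↔
      (s = 2 ∧ t = 2) ∨ (s = 2 ∧ t = 1) ∨ (s = 1 ∧ t = 2) := by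
  constructor
  · intro h
    have hs2 : s ≤ 2 := by
      have : ((s : ℤ) - 1) ^ 2 ≤ 2 := by nlinarith
      nlinarith
    have ht2 : t ≤ 2 := by
      have : ((t : ℤ) - 1) ^ 2 ≤ 2 := by nlinarith
      nlinarith
    interval_cases s <;> interval_cases t <;> simp_all
  · rintro (⟨rfl, rfl⟩ | ⟨rfl, rfl⟩ | ⟨rfl, rfl⟩) <;> norm_num

/-- Let `q` be nonzero and not a root of unity and `s, t ≥ 1`.  In the
`U_q(sl_3)`-type Yetter-Drinfel'd module, the full twist `θ_{s+t}` acts on the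
monomial `E_1^s E_2^t` by the scalar `q^{2(s² - s + t² - t - st)}`.
Consequently `θ_{s+t}(E_1^sE_2^t) = E_1^sE_2^t` iff
`(s-t)² + (s-1)² + (t-1)² = 2`, whose only positive integer solutions are
`(s,t) ∈ {(2,2), (2,1), (1,2)}`. -/
theorem sl3_fullTwist_monomial (q : ℂ) (hq : q ≠ 0)
    (hroot : ∀ N : ℕ, 1 ≤ N → q ^ N ≠ 1) (s t : ℕ) (hs : 1 ≤ s) (ht : 1 ≤ t) :
    fullTwist (sl3Braiding q) (s + t) (Finsupp.single (sl3Monomial s t) 1) =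
      (q ^ (2 * ((s : ℤ) ^ 2 - s + t ^ 2 - t - s * t))) •
        Finsupp.single (sl3Monomial s t) 1 ∧
    (fullTwist (sl3Braiding q) (s + t) (Finsupp.single (sl3Monomial s t) 1) =
        Finsupp.single (sl3Monomial s t) 1 ↔
      ((s : ℤ) - t) ^ 2 + ((s : ℤ) - 1) ^ 2 + ((t : ℤ) - 1) ^ 2 = 2) ∧
    (((s : ℤ) - t) ^ 2 + ((s : ℤ) - 1) ^ 2 + ((t : ℤ) - 1) ^ 2 = 2 ↔
      (s = 2 ∧ t = 2) ∨ (s = 2 ∧ t = 1) ∨ (s = 1 ∧ t = 2)) := by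
  refine ⟨fullTwist_sl3Monomial hq s t, ?_, sq_sub_add_sq_sub_one_add_sq_sub_one_eq_two_iff hs ht⟩
  rw [fullTwist_sl3Monomial hq, Finsupp.smul_single_one, (Finsupp.single_injective _).eq_iff,
    zpow_eq_one_iff_of_forall_pow_ne_one hroot]
  constructor <;> intro h <;> linarith
end
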